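/- arXiv:2602.09072 — 6 statements merged into one kernel-verified Lean document; each statement's English description precedes it below -/
import Mathlib

section
/- Let k ≥ 2 and let π = (π_1, …, π_L) be a linear (k−1)-superpattern of length L. Then the permutation γ = (L+1, π_1, π_2, …, π_L) of length L+1 is a circular k-superpattern; that is, for every permutation σ of length k there is a rotation ρ_r(σ) of σ and indices 0 ≤ i_1 < i_2 < ⋯ < i_k ≤ L such that the subsequence (γ(i_1), …, γ(i_k)) is order-isomorphic to ρ_r(σ). -/
/-- `l` is the one-line notation of a permutation of `{1, …, n}`. -/
def IsPermList (n : ℕ) (l : List ℕ) : Prop := l.Perm ((List.range n).map (· + 1))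

/-- The pattern `σ` occurs as an order-isomorphic subsequence of the word `w`:
there are indices `i₁ < ⋯ < i_k` with `w (i_p) < w (i_q)` exactly when `σ p < σ q`. -/
def OrderIsoContains (w σ : List ℕ) : Prop :=
  ∃ f : Fin σ.length → Fin w.length, StrictMono f ∧
    ∀ p q : Fin σ.length, w.get (f p) < w.get (f q) ↔ σ.get p < σ.get q

/-- `w` contains every permutation of length `k` as an order-isomorphic subsequence. -/
def IsSuperpattern (k : ℕ) (w : List ℕ) : Prop :=
  ∀ σ : List ℕ, IsPermList k σ → OrderIsoContains w σ

/-- `w` circularly contains every permutation of length `k`: some rotation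
`ρ_r σ = σ.rotate r` occurs as an order-isomorphic subsequence of `w`. -/
def IsCircSuperpattern (k : ℕ) (w : List ℕ) : Prop :=
  ∀ σ : List ℕ, IsPermList k σ → ∃ r < k, OrderIsoContains w (σ.rotate r)
/-!
Rotate `σ ∈ S_k` so that its maximum `k` comes first: `ρ_r σ = (k, τ)` with `τ ∈ S_{k-1}`.
The linear superpattern `π` contains `τ`, and prefixing the occurrence with the entry `L + 1`,
which exceeds every entry of `π` just as `k` exceeds every entry of `τ`, gives an occurrence
of `ρ_r σ` in `γ`.
-/

theorem IsPermList.mem_iff {n : ℕ} {l : List ℕ} (hl : IsPermList n l) {x : ℕ} :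
    x ∈ l ↔ 1 ≤ x ∧ x ≤ n := by
  rw [List.Perm.mem_iff hl]
  simp only [List.mem_map, List.mem_range]
  exact ⟨fun ⟨a, ha, hx⟩ ↦ by omega, fun hx ↦ ⟨x - 1, by omega, by omega⟩⟩

theorem IsPermList.rotate {n : ℕ} {l : List ℕ} (hl : IsPermList n l) (r : ℕ) :
    IsPermList n (l.rotate r) :=
  (l.rotate_perm r).trans hl

theorem IsPermList.of_cons {n : ℕ} {l : List ℕ} (hl : IsPermList (n + 1) ((n + 1) :: l)) :
    IsPermList n l := by
  refine List.Perm.cons_inv (a := n + 1) (hl.trans ?_)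
  rw [List.range_succ, List.map_append]
  exact List.perm_append_singleton _ _

theorem IsPermList.exists_rotate_eq_cons {n : ℕ} {σ : List ℕ} (hσ : IsPermList (n + 1) σ) :
    ∃ r < n + 1, ∃ τ, σ.rotate r = (n + 1) :: τ ∧ IsPermList n τ := by
  obtain ⟨s, t, rfl⟩ := List.append_of_mem (hσ.mem_iff.2 ⟨by omega, le_rfl⟩)
  have hrot : (s ++ (n + 1) :: t).rotate s.length = (n + 1) :: (t ++ s) :=
    List.rotate_append_length_eq _ _
  refine ⟨s.length, ?_, t ++ s, hrot, (hrot ▸ hσ.rotate s.length).of_cons⟩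
  have := hσ.length_eq
  simp only [List.length_append, List.length_cons, List.length_map, List.length_range] at this
  omega

theorem OrderIsoContains.cons {w σ : List ℕ} (h : OrderIsoContains w σ) {a b : ℕ}
    (ha : ∀ x ∈ w, x < a) (hb : ∀ y ∈ σ, y < b) : OrderIsoContains (a :: w) (b :: σ) := by
  obtain ⟨f, hf, hiso⟩ := h
  refine ⟨Fin.cons 0 (Fin.succ ∘ f), Fin.strictMono_cons.2 ⟨fun _ ↦ Fin.succ_pos _,
    Fin.strictMono_succ.comp hf⟩, ?_⟩
  have hwa (i) := ha _ (w.get_mem i)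
  have hσb (j) := hb _ (σ.get_mem j)
  intro p q
  induction p using Fin.cases <;> induction q using Fin.cases <;>
    simp only [Fin.cons_zero, Fin.cons_succ, Function.comp_apply, List.get_cons_zero,
      List.get_cons_succ', lt_irrefl, hiso]
  case zero.succ j => exact iff_of_false (hwa (f j)).not_gt (hσb j).not_gt
  case succ.zero j => exact iff_of_true (hwa (f j)) (hσb j)

/-- If `π` is a linear `(k−1)`-superpattern of length `L`, then
`γ = (L+1, π₁, …, π_L)` is a circular `k`-superpattern. -/
theorem circ_superpattern_from_linear (k L : ℕ) (hk : 2 ≤ k)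
    (π : List ℕ) (hπ : IsPermList L π) (hsup : IsSuperpattern (k - 1) π) :
    IsCircSuperpattern k ((L + 1) :: π) := by
  obtain ⟨m, rfl⟩ : ∃ m, k = m + 1 := ⟨k - 1, by omega⟩
  intro σ hσ
  obtain ⟨r, hr, τ, hrot, hτ⟩ := hσ.exists_rotate_eq_cons
  refine ⟨r, hr, hrot ▸ (hsup τ hτ).cons (fun x hx ↦ ?_) (fun y hy ↦ ?_)⟩
  · exact Nat.lt_succ_of_le (hπ.mem_iff.1 hx).2
  · exact Nat.lt_succ_of_le (hτ.mem_iff.1 hy).2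
end

section
/- (Lift identity) For every permutation σ = (σ_1, …, σ_k) of {1, …, k} with k ≥ 1, the scores of σ and of σ⁺ = (σ_1+1, …, σ_k+1) satisfy S(σ) + S(σ⁺) = 1. -/
/-- Parity sign: `1` for even integers, `-1` for odd integers. -/
def pSign (x : ℤ) : ℤ := if Even x then 1 else -1

/-- Local cost `C_{xy} = δ_{xy} − ((p_x p_y + 1)/2)·sgn(x−y)·p_x`. -/
def locCost (x y : ℤ) : ℤ :=
  (if x = y then 1 else 0) - ((pSign x * pSign y + 1) / 2) * (x - y).sign * pSign x

/-- Sum of local costs over consecutive pairs of the sequence. -/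
def pairCostSum (l : List ℤ) : ℤ := ((l.zip l.tail).map fun q => locCost q.1 q.2).sum

/-- Score `S(σ) = (1 + p_{σ₁})/2 + Σ_{i=1}^{k-1} C_{σ_i σ_{i+1}}`. -/
def score (l : List ℤ) : ℤ := (1 + pSign (l.headD 0)) / 2 + pairCostSum l

/-- Circular score `S^c(σ) = Σ_{i=1}^{k} C_{σ_i, σ_{(i mod k)+1}}` (indices cyclic). -/
def cscore (l : List ℤ) : ℤ := ((l.zip (l.rotate 1)).map fun q => locCost q.1 q.2).sum

/-! Shifting by one flips every parity sign, so for `x ≠ y` the pair costs `C_{xy}` and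
`C_{x+1,y+1}` cancel (the factor `(p_x p_y + 1)/2` is unchanged, `p_x` changes sign);
for a sequence of distinct entries the two pair sums therefore cancel, and only the head
terms `(1 + p_a)/2 + (1 + p_{a+1})/2 = 1` remain. -/

lemma pSign_add_one (x : ℤ) : pSign (x + 1) = -pSign x := by
  by_cases h : Even x <;> simp [pSign, h]

lemma pSign_eq_one_or_eq_neg_one (x : ℤ) : pSign x = 1 ∨ pSign x = -1 := by
  by_cases h : Even x <;> simp [pSign, h]

lemma locCost_add_locCost_add_one {x y : ℤ} (h : x ≠ y) :
    locCost x y + locCost (x + 1) (y + 1) = 0 := by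
  simp [locCost, pSign_add_one, h]

lemma pairCostSum_cons_cons (a b : ℤ) (t : List ℤ) :
    pairCostSum (a :: b :: t) = locCost a b + pairCostSum (b :: t) := by
  simp [pairCostSum]

lemma pairCostSum_add_pairCostSum_map_add_one {l : List ℤ} (hl : l.Nodup) :
    pairCostSum l + pairCostSum (l.map (· + 1)) = 0 := by
  induction l with
  | nil => simp [pairCostSum]
  | cons a t ih =>
    cases t with
    | nil => simp [pairCostSum]
    | cons b t =>
      have hab : a ≠ b := fun h => (List.nodup_cons.mp hl).1 (h ▸ List.mem_cons_self)
      have htail := ih hl.of_cons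
      simp only [List.map_cons, pairCostSum_cons_cons] at htail ⊢
      linarith [locCost_add_locCost_add_one hab]

lemma score_add_score_map_add_one {l : List ℤ} (hne : l ≠ []) (hl : l.Nodup) :
    score l + score (l.map (· + 1)) = 1 := by
  obtain ⟨a, t, rfl⟩ := List.exists_cons_of_ne_nil hne
  have hpairs := pairCostSum_add_pairCostSum_map_add_one hl
  rw [List.map_cons] at hpairs
  simp only [score, List.map_cons, List.headD_cons, pSign_add_one]
  rcases pSign_eq_one_or_eq_neg_one a with h | h <;> rw [h] <;> norm_num <;> linarith

/-- Lift identity: for every permutation `σ` of `{1, …, k}` with `k ≥ 1`,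
`S(σ) + S(σ⁺) = 1`, where `σ⁺ = (σ₁+1, …, σ_k+1)`. -/
theorem lift_identity (k : ℕ) (hk : 1 ≤ k) (l : List ℤ)
    (hl : l.Perm ((List.range k).map fun i => (i : ℤ) + 1)) :
    score l + score (l.map (· + 1)) = 1 := by
  have hnd : l.Nodup := by
    refine hl.nodup_iff.mpr (List.Nodup.map (add_left_injective 1) ?_)
    -- the coercion `List ℕ → List ℤ` in the statement elaborates to a monadic bind
    simp only [List.pure_def, List.bind_eq_flatMap, ← List.map_eq_flatMap]
    exact List.nodup_range.map Nat.cast_injective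
  have hne : l ≠ [] := by
    rintro rfl
    have := hl.length_eq
    simp at this
    omega
  exact score_add_score_map_add_one hne hnd
end

section
/- For every permutation σ of {1, …, k}, either σ or σ⁺ = (σ_1+1, …, σ_k+1) occurs as an exact subsequence of the zigzag word zz(k, k+1). -/
/-!
Embed a word greedily into the zigzag word, each letter into the earliest run that can take it.
Passing from a letter `a` to a letter `b ≠ a` costs `jump a b ∈ {0, 1, 2}` runs: one if the
parities differ, otherwise none or two according to whether `b` comes after `a` in their common
run. Adding one to both letters swaps their parities and hence the direction of that run, so
`jump a b + jump (a + 1) (b + 1) = 2`. The greedy embeddings of `σ` and `σ⁺` start in the runs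
`1` and `2` (in some order, by the parity of `σ₁`), so the indices of the runs where they end add
up to `3 + 2 (k - 1) = 2k + 1`, and one of them ends by run `k`.
-/

/-- The `j`-th run of the zigzag word over alphabet `{1, …, q}`: for odd `j` the odd
numbers in increasing order, for even `j` the even numbers in decreasing order. -/
def zrun (j q : ℕ) : List ℕ :=
  if j % 2 = 1 then (List.range (q + 1)).filter (fun n => n % 2 = 1)
  else ((List.range (q + 1)).filter (fun n => n % 2 = 0 && n != 0)).reverse

/-- The zigzag word `zz(m, q) = R₁ R₂ ⋯ R_m`. -/
def zz (m q : ℕ) : List ℕ := ((List.range m).map fun j => zrun (j + 1) q).flatten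

namespace List

variable {α : Type*} [DecidableEq α]

theorem cons_sublist_dropWhile_ne_append {l u v : List α} {a : α} (ha : a ∈ l) (h : u <+ v) :
    a :: u <+ l.dropWhile (· != a) ++ v := by
  induction l with
  | nil => simp at ha
  | cons o l ih =>
    by_cases hoa : o = a
    · subst hoa
      rw [dropWhile_cons_of_neg (by simp)]
      exact (h.trans (sublist_append_right l v)).cons_cons o
    · rw [dropWhile_cons_of_pos (by simpa using hoa)]
      exact ih ((mem_cons.1 ha).resolve_left (Ne.symm hoa))

theorem cons_dropWhile_ne_sublist_dropWhile_ne {R : α → α → Prop} [Std.Asymm R] {l : List α}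
    {a b : α} (hl : l.Pairwise R) (ha : a ∈ l) (hab : R a b) :
    a :: l.dropWhile (· != b) <+ l.dropWhile (· != a) := by
  induction l with
  | nil => simp at ha
  | cons o l ih =>
    by_cases hoa : o = a
    · subst hoa
      have hbo : b ≠ o := by rintro rfl; exact Std.Asymm.asymm _ _ hab hab
      rw [dropWhile_cons_of_pos (by simpa using hbo.symm), dropWhile_cons_of_neg (by simp)]
      exact (dropWhile_suffix _).sublist.cons_cons o
    · have ha' : a ∈ l := (mem_cons.1 ha).resolve_left (Ne.symm hoa)
      have hob : o ≠ b := by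
        rintro rfl
        exact Std.Asymm.asymm _ _ hab ((pairwise_cons.1 hl).1 a ha')
      rw [dropWhile_cons_of_pos (by simpa using hob), dropWhile_cons_of_pos (by simpa using hoa)]
      exact ih hl.of_cons ha'

end List

namespace Zigzag

open List

theorem mem_zrun {a r q : ℕ} : a ∈ zrun r q ↔ 0 < a ∧ a ≤ q ∧ a % 2 = r % 2 := by
  unfold zrun
  split_ifs <;>
    simp only [mem_reverse, mem_filter, mem_range, Order.lt_add_one_iff, Bool.and_eq_true,
      decide_eq_true_eq, bne_iff_ne, ne_eq] <;>
    omega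

theorem pairwise_zrun_of_odd {r q : ℕ} (hr : r % 2 = 1) : (zrun r q).Pairwise (· < ·) := by
  rw [zrun, if_pos hr]
  exact pairwise_lt_range.filter _

theorem pairwise_zrun_of_even {r q : ℕ} (hr : r % 2 = 0) : (zrun r q).Pairwise (· > ·) := by
  rw [zrun, if_neg (by omega), pairwise_reverse]
  exact pairwise_lt_range.filter _

/-- `runs r n q = R_r R_{r+1} ⋯ R_{r+n-1}` over the alphabet `{1, …, q}`. -/
def runs (r n q : ℕ) : List ℕ := (range' r n).flatMap (zrun · q)

theorem runs_succ {r n q : ℕ} : runs r (n + 1) q = zrun r q ++ runs (r + 1) n q := by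
  simp [runs, range'_succ]

theorem runs_sublist_runs {r n r' n' q : ℕ} (hr : r ≤ r') (hn : r' + n' ≤ r + n) :
    runs r' n' q <+ runs r n q := by
  refine Sublist.flatMap (sublist_of_subperm_of_pairwise (r := (· ≤ ·))
    (Nodup.subperm nodup_range' ?_) pairwise_le_range' pairwise_le_range') _
  intro x
  simp only [mem_range'_1]
  omega

theorem dropWhile_append_runs_sublist {r n q : ℕ} (p : ℕ → Bool) :
    (zrun r q).dropWhile p ++ runs (r + 1) n q <+ runs r (n + 1) q :=
  runs_succ ▸ (dropWhile_suffix p).sublist.append_right _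

theorem zz_eq_runs {m q : ℕ} : zz m q = runs 1 m q := by
  simp [zz, runs, range'_eq_map_range, flatMap_def, Nat.add_comm, Function.comp_def]

def jump (a b : ℕ) : ℕ :=
  if b % 2 ≠ a % 2 then 1
  else if a % 2 = 1 then (if a < b then 0 else 2)
  else (if b < a then 0 else 2)

def jumps : ℕ → List ℕ → ℕ
  | _, [] => 0
  | a, b :: w => jump a b + jumps b w

theorem mem_zrun_add_jump {a b r q : ℕ} (ha : a ∈ zrun r q) (hb0 : 0 < b) (hbq : b ≤ q) :
    b ∈ zrun (r + jump a b) q := by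
  rw [mem_zrun] at ha ⊢
  unfold jump
  split_ifs <;> omega

theorem cons_dropWhile_sublist_of_jump_eq_zero {a b r q : ℕ} (h : jump a b = 0)
    (ha : a ∈ zrun r q) : a :: (zrun r q).dropWhile (· != b) <+ (zrun r q).dropWhile (· != a) := by
  have har := (mem_zrun.1 ha).2.2
  unfold jump at h
  rcases Nat.mod_two_eq_zero_or_one r with hr | hr
  · exact cons_dropWhile_ne_sublist_dropWhile_ne (pairwise_zrun_of_even hr) ha
      (show b < a by split_ifs at h <;> omega)
  · exact cons_dropWhile_ne_sublist_dropWhile_ne (pairwise_zrun_of_odd hr) ha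
      (show a < b by split_ifs at h <;> omega)

/-- `(zrun r q).dropWhile (· != a)` is the part of the run `R_r` from `a` on. -/
theorem cons_sublist_dropWhile_append_runs {q : ℕ} {w : List ℕ} (hw : ∀ x ∈ w, 0 < x ∧ x ≤ q)
    {a r : ℕ} (ha : a ∈ zrun r q) :
    a :: w <+ (zrun r q).dropWhile (· != a) ++ runs (r + 1) (jumps a w) q := by
  induction w generalizing a r with
  | nil => exact cons_sublist_dropWhile_ne_append ha (nil_sublist _)
  | cons b w ih =>
    have hb := mem_zrun_add_jump ha (hw b mem_cons_self).1 (hw b mem_cons_self).2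
    have hbw := ih (fun x hx => hw x (mem_cons_of_mem b hx)) hb
    rw [jumps]
    rcases Nat.eq_zero_or_pos (jump a b) with h0 | hpos
    · rw [h0, Nat.add_zero] at hbw
      rw [h0, Nat.zero_add]
      exact (hbw.cons_cons a).trans
        ((cons_dropWhile_sublist_of_jump_eq_zero h0 ha).append_right _)
    · refine cons_sublist_dropWhile_ne_append ha (hbw.trans ?_)
      exact (dropWhile_append_runs_sublist _).trans (runs_sublist_runs (by omega) (by omega))

theorem cons_sublist_zz {q m a : ℕ} {w : List ℕ} (hw : ∀ x ∈ a :: w, 0 < x ∧ x ≤ q)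
    (hm : 2 - a % 2 + jumps a w ≤ m) : a :: w <+ zz m q := by
  have ha : a ∈ zrun (2 - a % 2) q :=
    mem_zrun.2 ⟨(hw a mem_cons_self).1, (hw a mem_cons_self).2, by omega⟩
  rw [zz_eq_runs]
  exact (cons_sublist_dropWhile_append_runs (fun x hx => hw x (mem_cons_of_mem a hx)) ha).trans
    ((dropWhile_append_runs_sublist _).trans (runs_sublist_runs (by omega) (by omega)))

theorem jump_add_jump_succ {a b : ℕ} (h : a ≠ b) : jump a b + jump (a + 1) (b + 1) = 2 := by
  unfold jump
  split_ifs <;> omega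

theorem jumps_add_jumps_map_succ {a : ℕ} {w : List ℕ} (h : (a :: w).IsChain (· ≠ ·)) :
    jumps a w + jumps (a + 1) (w.map (· + 1)) = 2 * w.length := by
  induction w generalizing a with
  | nil => rfl
  | cons b w ih =>
    rw [isChain_cons_cons] at h
    have := jump_add_jump_succ h.1
    have := ih h.2
    simp only [jumps, map_cons, length_cons]
    omega

end Zigzag

open Zigzag List

/-- For every permutation `σ` of `{1, …, k}`, either `σ` or `σ⁺ = (σ₁+1, …, σ_k+1)`
occurs as an exact subsequence of `zz(k, k+1)`. -/
theorem self_or_lift_sublist_zz (k : ℕ) (l : List ℕ)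
    (hl : l.Perm ((List.range k).map (· + 1))) :
    l.Sublist (zz k (k + 1)) ∨ (l.map (· + 1)).Sublist (zz k (k + 1)) := by
  rcases l with _ | ⟨a, w⟩
  · exact .inl (nil_sublist _)
  have hlen : w.length + 1 = k := by simpa using hl.length_eq
  have hbound : ∀ x ∈ a :: w, 0 < x ∧ x ≤ k := fun x hx => by
    have := hl.subset hx
    simp only [mem_map, mem_range] at this
    omega
  have hchain : (a :: w).IsChain (· ≠ ·) :=
    (hl.nodup_iff.2 (nodup_range.map (add_left_injective 1))).isChain
  have hsum := jumps_add_jumps_map_succ hchain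
  by_cases h : 2 - a % 2 + jumps a w ≤ k
  · refine .inl (cons_sublist_zz (fun x hx => ?_) h)
    exact ⟨(hbound x hx).1, (hbound x hx).2.trans k.le_succ⟩
  · refine .inr (cons_sublist_zz (a := a + 1) (w := w.map (· + 1)) ?_ (by omega))
    show ∀ x ∈ (a :: w).map (· + 1), _
    rw [forall_mem_map]
    exact fun x hx => ⟨x.succ_pos, Nat.succ_le_succ (hbound x hx).2⟩
end

section
/- If k is odd, then for every permutation σ of {1, …, k}, the circular score S^c(σ) is nonzero. -/
lemma pSign_cast_zmod_two (x : ℤ) : (pSign x : ZMod 2) = 1 := by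
  unfold pSign; split_ifs <;> decide

lemma sign_sub_cast_zmod_two {x y : ℤ} (h : x ≠ y) : ((x - y).sign : ZMod 2) = 1 := by
  rcases h.lt_or_gt with h | h
  · rw [Int.sign_eq_neg_one_of_neg (by omega)]; decide
  · rw [Int.sign_eq_one_of_pos (by omega)]; decide

lemma intCast_zmod_two_eq_ite (x : ℤ) : (x : ZMod 2) = if Even x then 0 else 1 := by
  split_ifs with h
  · exact ZMod.intCast_eq_zero_iff_even.mpr h
  · exact ZMod.intCast_eq_one_iff_odd.mpr (Int.not_even_iff_odd.mp h)

lemma pSign_mul_add_one_div_two_cast_zmod_two (x y : ℤ) :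
    (((pSign x * pSign y + 1) / 2 : ℤ) : ZMod 2) = x + y + 1 := by
  rw [intCast_zmod_two_eq_ite x, intCast_zmod_two_eq_ite y]
  by_cases hx : Even x <;> by_cases hy : Even y <;> simp [pSign, hx, hy] <;> decide

lemma locCost_cast_zmod_two (x y : ℤ) : (locCost x y : ZMod 2) = x + y + 1 := by
  by_cases hxy : x = y
  · subst hxy
    simp [locCost, ← two_mul, show (2 : ZMod 2) = 0 from rfl]
  · simp [locCost, hxy, sign_sub_cast_zmod_two hxy, pSign_cast_zmod_two,
      pSign_mul_add_one_div_two_cast_zmod_two, add_comm]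

lemma cscore_cast_zmod_two (l : List ℤ) : (cscore l : ZMod 2) = l.length := by
  have hlen : l.length = (l.rotate 1).length := (l.length_rotate 1).symm
  unfold cscore
  rw [Int.cast_list_sum, List.map_map]
  simp only [Function.comp_def, locCost_cast_zmod_two, List.sum_map_add]
  rw [show (fun q : ℤ × ℤ => (q.1 : ZMod 2)) = Int.cast ∘ Prod.fst from rfl,
    show (fun q : ℤ × ℤ => (q.2 : ZMod 2)) = Int.cast ∘ Prod.snd from rfl,
    ← List.map_map, ← List.map_map, List.map_fst_zip hlen.le, List.map_snd_zip hlen.ge,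
    List.map_rotate, (List.rotate_perm _ 1).sum_eq, ← two_mul, show (2 : ZMod 2) = 0 from rfl]
  simp

lemma odd_cscore_iff (l : List ℤ) : Odd (cscore l) ↔ Odd l.length := by
  rw [← ZMod.intCast_eq_one_iff_odd, ← ZMod.natCast_eq_one_iff_odd, cscore_cast_zmod_two]

/-- For odd `k`, every permutation `σ` of `{1, …, k}` has nonzero circular score. -/
theorem cscore_ne_zero_of_odd (k : ℕ) (hk : Odd k) (l : List ℤ)
    (hl : l.Perm ((List.range k).map fun i => (i : ℤ) + 1)) :
    cscore l ≠ 0 := by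
  have hlen : l.length = k := by simpa using hl.length_eq
  have hodd : Odd (cscore l) := (odd_cscore_iff l).mpr (hlen ▸ hk)
  rintro h
  simp [h] at hodd
end

section
/- Let k > 3 be odd, let zzc(k) be the word obtained from zz(k−1, k−1) by replacing its last two letters (which are 2, 1) by k, k−1, and let γ be the permutation obtained from zzc(k) by breaking ties. Then some rotation of the permutation (k−1, k−2, …, 2, 1, k) is order-isomorphic to a subsequence of γ; i.e., γ circularly contains the pattern (k−1, k−2, …, 1, k). -/
/-- `zzc(k)`: the zigzag word `zz(k-1, k-1)` (with a trailing `1` appended) whose final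
two letters `2, 1` are replaced by `k, k-1`; equivalently, drop the last letter of
`zz(k-1,k-1)` and append `k, k-1`.  E.g. `zzc 5 = [1,3,4,2,1,3,4,5,4]`. -/
def zzc (k : ℕ) : List ℕ := (zz (k - 1) (k - 1)).dropLast ++ [k, k - 1]

/-- The permutation obtained from the word `ω` by breaking ties: position `i` receives
the rank (starting from 1) of the pair `(ω_i, −i)` in lexicographic order, i.e. the
number of positions `j` with `ω_j < ω_i`, or `ω_j = ω_i` and `j ≥ i`. -/
def breakTies (ω : List ℕ) : List ℕ :=
  ω.mapIdx fun i x =>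
    ((ω.mapIdx fun j y => (j, y)).filter fun p => p.2 < x || (p.2 = x && i ≤ p.1)).length

/-!
Rotating the pattern by one gives `(k−2, …, 2, 1, k, k−1)`, which is already a subword of
`zzc(k)`: since `k − 1` is even, the `j`-th of the first `k − 2` runs of the zigzag word contains
the letter `k − 1 − j`, and `zzc(k)` ends in `k, k − 1`. The letters of this subword are
distinct, and breaking ties preserves strict inequalities between letters, so the entries of `γ`
at these positions form an order-isomorphic copy.
-/

theorem List.length_filter_lt_length_filter {α : Type*} {p q : α → Bool} {l : List α}
    (hpq : ∀ x ∈ l, p x → q x) {x : α} (hx : x ∈ l) (hqx : q x) (hpx : ¬p x) :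
    (l.filter p).length < (l.filter q).length := by
  have hfilter : l.filter p = (l.filter q).filter p := by
    rw [List.filter_filter]
    refine List.filter_congr fun y hy => ?_
    cases h : p y <;> simp [h, hpq y hy]
  rw [hfilter, List.length_filter_lt_length_iff_exists]
  exact ⟨x, List.mem_filter.2 ⟨hx, hqx⟩, hpx⟩

theorem breakTies_length (ω : List ℕ) : (breakTies ω).length = ω.length := by
  simp [breakTies]

theorem breakTies_getElem_lt_of_lt {ω : List ℕ} {i j : ℕ} (hi : i < ω.length)
    (hj : j < ω.length) (h : ω[i] < ω[j]) :
    (breakTies ω)[i]'(by rwa [breakTies_length]) <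
      (breakTies ω)[j]'(by rwa [breakTies_length]) := by
  simp only [breakTies, List.getElem_mapIdx]
  refine List.length_filter_lt_length_filter (x := (j, ω[j])) ?_ ?_ ?_ ?_
  · intro p _ hp
    simp only [Bool.or_eq_true, decide_eq_true_eq, Bool.and_eq_true] at hp ⊢
    omega
  · simpa [List.mem_iff_getElem] using hj
  · simp
  · simp only [Bool.or_eq_true, decide_eq_true_eq, Bool.and_eq_true]
    omega

theorem orderIsoContains_breakTies_of_sublist {σ ω : List ℕ} (hσ : σ.Nodup) (h : σ.Sublist ω) :
    OrderIsoContains (breakTies ω) σ := by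
  obtain ⟨f, hf⟩ := List.sublist_iff_exists_fin_orderEmbedding_get_eq.mp h
  refine ⟨fun p => Fin.cast (breakTies_length ω).symm (f p),
    fun p q hpq => f.strictMono hpq, fun p q => ?_⟩
  have hmono : ∀ p q, σ.get p < σ.get q →
      (breakTies ω).get (Fin.cast (breakTies_length ω).symm (f p)) <
        (breakTies ω).get (Fin.cast (breakTies_length ω).symm (f q)) := by
    intro p q hpq
    rw [hf, hf] at hpq
    exact breakTies_getElem_lt_of_lt _ _ hpq
  refine ⟨fun hlt => ?_, hmono p q⟩
  rcases lt_trichotomy (σ.get p) (σ.get q) with hpq | hpq | hpq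
  · exact hpq
  · rw [hσ.get_inj_iff.mp hpq] at hlt
    exact (lt_irrefl _ hlt).elim
  · exact absurd hlt (hmono q p hpq).asymm

theorem mem_zrun {n j q : ℕ} : n ∈ zrun j q ↔ 0 < n ∧ n ≤ q ∧ n % 2 = j % 2 := by
  unfold zrun
  split_ifs
  · simp only [List.mem_filter, List.mem_range, decide_eq_true_eq]
    omega
  · simp only [List.mem_reverse, List.mem_filter, List.mem_range, Bool.and_eq_true,
      decide_eq_true_eq, bne_iff_ne, ne_eq]
    omega

theorem zz_succ (t q : ℕ) : zz (t + 1) q = zz t q ++ zrun (t + 1) q := by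
  simp [zz, List.range_succ]

theorem reverse_range'_sublist_zz {q : ℕ} (hq : q % 2 = 0) :
    ∀ t < q, (List.range' (q - t) t).reverse.Sublist (zz t q)
  | 0, _ => by simp
  | t + 1, ht => by
    have hrange : List.range' (q - (t + 1)) (t + 1) = (q - (t + 1)) :: List.range' (q - t) t := by
      rw [List.range'_succ, show q - (t + 1) + 1 = q - t by omega]
    rw [hrange, List.reverse_cons, zz_succ]
    refine (reverse_range'_sublist_zz hq t (by omega)).append ?_
    rw [List.singleton_sublist, mem_zrun]
    omega

theorem map_succ_reverse_range_append_rotate_one {k : ℕ} (hk : 2 ≤ k) :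
    ((List.range (k - 1)).reverse.map (· + 1) ++ [k]).rotate 1 =
      (List.range' 1 (k - 2)).reverse ++ [k, k - 1] := by
  have hrange : (List.range (k - 1)).map (· + 1) = List.range' 1 (k - 2) ++ [k - 1] := by
    rw [List.range_eq_range', ← List.range'_succ_left, show k - 1 = k - 2 + 1 by omega,
      List.range'_1_concat, Nat.add_comm 1]
  rw [List.map_reverse, hrange, List.reverse_append, List.reverse_singleton,
    List.singleton_append, List.cons_append, List.rotate_cons_succ, List.rotate_zero,
    List.append_assoc, List.singleton_append]

theorem nodup_reverse_range'_append {k : ℕ} (hk : 0 < k) :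
    ((List.range' 1 (k - 2)).reverse ++ [k, k - 1]).Nodup := by
  have hpair : [k, k - 1].Nodup := List.nodup_cons.2 ⟨by rw [List.mem_singleton]; omega, List.nodup_singleton _⟩
  rw [List.nodup_append, List.nodup_reverse]
  refine ⟨List.nodup_range', hpair, fun x hx y hy => ?_⟩
  simp only [List.mem_reverse, List.mem_range'_1] at hx
  simp only [List.mem_cons, List.not_mem_nil, or_false] at hy
  omega

theorem reverse_range'_append_sublist_zzc {k : ℕ} (hk : 1 < k) (hodd : Odd k) :
    ((List.range' 1 (k - 2)).reverse ++ [k, k - 1]).Sublist (zzc k) := by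
  obtain ⟨c, rfl⟩ := hodd
  have hzz : (List.range' 1 (2 * c - 1)).reverse.Sublist (zz (2 * c - 1) (2 * c)) := by
    simpa [show 2 * c - (2 * c - 1) = 1 by omega] using
      reverse_range'_sublist_zz (Nat.mul_mod_right 2 c) (2 * c - 1) (by omega)
  have hrun : zrun (2 * c) (2 * c) ≠ [] :=
    List.ne_nil_of_mem (mem_zrun.2 ⟨two_pos, by omega, by omega⟩)
  have hdrop : (zz (2 * c - 1) (2 * c)).Sublist (zz (2 * c) (2 * c)).dropLast := by
    rw [show zz (2 * c) (2 * c) = zz (2 * c - 1 + 1) (2 * c) by congr 1; omega, zz_succ,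
      show 2 * c - 1 + 1 = 2 * c by omega, List.dropLast_append_of_ne_nil hrun]
    exact List.sublist_append_left _ _
  simpa [zzc] using (hzz.trans hdrop).append (List.Sublist.refl [2 * c + 1, 2 * c])

/-- For odd `k > 3`, the permutation `γ` obtained by breaking ties from `zzc(k)`
circularly contains the pattern `(k−1, k−2, …, 2, 1, k)`: some rotation of it is
order-isomorphic to a subsequence of `γ`. -/
theorem gamma_contains_decreasing (k : ℕ) (hk : 3 < k) (hodd : Odd k) :
    ∃ r < k, OrderIsoContains (breakTies (zzc k))
      ((((List.range (k - 1)).reverse.map (· + 1)) ++ [k]).rotate r) := by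
  refine ⟨1, by omega, ?_⟩
  rw [map_succ_reverse_range_append_rotate_one (by omega)]
  exact orderIsoContains_breakTies_of_sublist (nodup_reverse_range'_append (by omega))
    (reverse_range'_append_sublist_zzc (by omega) hodd)
end

section
/- The minimal length of a circular 4-superpattern is 6: there exists a permutation of length 6 that is a circular 4-superpattern, and no permutation of length at most 5 is a circular 4-superpattern. -/
instance (n : ℕ) (l : List ℕ) : Decidable (IsPermList n l) :=
  inferInstanceAs (Decidable (l.Perm _))

/-- Kernel-friendly encoding of containment of a length-4 pattern. -/
def Q (w σ : List ℕ) : Prop :=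
  ∃ i ∈ List.range w.length, ∃ j ∈ List.range w.length, i < j ∧
  ∃ k ∈ List.range w.length, j < k ∧ ∃ l ∈ List.range w.length, k < l ∧
    ((w.getD i 0 < w.getD j 0 ↔ σ.getD 0 0 < σ.getD 1 0) ∧
     (w.getD i 0 < w.getD k 0 ↔ σ.getD 0 0 < σ.getD 2 0) ∧
     (w.getD i 0 < w.getD l 0 ↔ σ.getD 0 0 < σ.getD 3 0) ∧
     (w.getD j 0 < w.getD i 0 ↔ σ.getD 1 0 < σ.getD 0 0) ∧
     (w.getD j 0 < w.getD k 0 ↔ σ.getD 1 0 < σ.getD 2 0) ∧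
     (w.getD j 0 < w.getD l 0 ↔ σ.getD 1 0 < σ.getD 3 0) ∧
     (w.getD k 0 < w.getD i 0 ↔ σ.getD 2 0 < σ.getD 0 0) ∧
     (w.getD k 0 < w.getD j 0 ↔ σ.getD 2 0 < σ.getD 1 0) ∧
     (w.getD k 0 < w.getD l 0 ↔ σ.getD 2 0 < σ.getD 3 0) ∧
     (w.getD l 0 < w.getD i 0 ↔ σ.getD 3 0 < σ.getD 0 0) ∧
     (w.getD l 0 < w.getD j 0 ↔ σ.getD 3 0 < σ.getD 1 0) ∧
     (w.getD l 0 < w.getD k 0 ↔ σ.getD 3 0 < σ.getD 2 0))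

set_option synthInstance.maxHeartbeats 1000000 in
set_option synthInstance.maxSize 5000 in
instance Qdec (w σ : List ℕ) : Decidable (Q w σ) :=
  inferInstanceAs (Decidable (∃ i ∈ List.range w.length, ∃ j ∈ List.range w.length, i < j ∧
    ∃ k ∈ List.range w.length, j < k ∧ ∃ l ∈ List.range w.length, k < l ∧
    ((w.getD i 0 < w.getD j 0 ↔ σ.getD 0 0 < σ.getD 1 0) ∧
     (w.getD i 0 < w.getD k 0 ↔ σ.getD 0 0 < σ.getD 2 0) ∧
     (w.getD i 0 < w.getD l 0 ↔ σ.getD 0 0 < σ.getD 3 0) ∧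
     (w.getD j 0 < w.getD i 0 ↔ σ.getD 1 0 < σ.getD 0 0) ∧
     (w.getD j 0 < w.getD k 0 ↔ σ.getD 1 0 < σ.getD 2 0) ∧
     (w.getD j 0 < w.getD l 0 ↔ σ.getD 1 0 < σ.getD 3 0) ∧
     (w.getD k 0 < w.getD i 0 ↔ σ.getD 2 0 < σ.getD 0 0) ∧
     (w.getD k 0 < w.getD j 0 ↔ σ.getD 2 0 < σ.getD 1 0) ∧
     (w.getD k 0 < w.getD l 0 ↔ σ.getD 2 0 < σ.getD 3 0) ∧
     (w.getD l 0 < w.getD i 0 ↔ σ.getD 3 0 < σ.getD 0 0) ∧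
     (w.getD l 0 < w.getD j 0 ↔ σ.getD 3 0 < σ.getD 1 0) ∧
     (w.getD l 0 < w.getD k 0 ↔ σ.getD 3 0 < σ.getD 2 0))))

lemma getD_of_lt (l : List ℕ) (n : ℕ) (h : n < l.length) : l.getD n 0 = l[n] := by
  simp [List.getD_eq_getElem?_getD, List.getElem?_eq_getElem h]

lemma oic_iff_Q (w σ : List ℕ) (hσ : σ.length = 4) : OrderIsoContains w σ ↔ Q w σ := by
  constructor
  · rintro ⟨f, hm, hiff⟩
    have h0 : (0 : ℕ) < σ.length := by omega
    have h1 : (1 : ℕ) < σ.length := by omega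
    have h2 : (2 : ℕ) < σ.length := by omega
    have h3 : (3 : ℕ) < σ.length := by omega
    have hgen : ∀ (p q : ℕ) (hp : p < σ.length) (hq : q < σ.length), p ≠ q →
        (w.getD (f ⟨p, hp⟩).val 0 < w.getD (f ⟨q, hq⟩).val 0 ↔
          σ.getD p 0 < σ.getD q 0) := by
      intro p q hp hq _
      rw [getD_of_lt _ _ (f ⟨p, hp⟩).isLt, getD_of_lt _ _ (f ⟨q, hq⟩).isLt,
        getD_of_lt _ _ hp, getD_of_lt _ _ hq]
      simpa [List.get_eq_getElem] using hiff ⟨p, hp⟩ ⟨q, hq⟩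
    exact ⟨(f ⟨0, h0⟩).val, List.mem_range.mpr (f _).isLt,
           (f ⟨1, h1⟩).val, List.mem_range.mpr (f _).isLt,
           hm (show (⟨0, h0⟩ : Fin σ.length) < ⟨1, h1⟩ by simp [Fin.lt_def]),
           (f ⟨2, h2⟩).val, List.mem_range.mpr (f _).isLt,
           hm (show (⟨1, h1⟩ : Fin σ.length) < ⟨2, h2⟩ by simp [Fin.lt_def]),
           (f ⟨3, h3⟩).val, List.mem_range.mpr (f _).isLt,
           hm (show (⟨2, h2⟩ : Fin σ.length) < ⟨3, h3⟩ by simp [Fin.lt_def]),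
           hgen 0 1 h0 h1 (by omega), hgen 0 2 h0 h2 (by omega),
           hgen 0 3 h0 h3 (by omega), hgen 1 0 h1 h0 (by omega),
           hgen 1 2 h1 h2 (by omega), hgen 1 3 h1 h3 (by omega),
           hgen 2 0 h2 h0 (by omega), hgen 2 1 h2 h1 (by omega),
           hgen 2 3 h2 h3 (by omega), hgen 3 0 h3 h0 (by omega),
           hgen 3 1 h3 h1 (by omega), hgen 3 2 h3 h2 (by omega)⟩
  · rintro ⟨i, hi, j, hj, hij, k, hk, hjk, l, hl, hkl,
      c01, c02, c03, c10, c12, c13, c20, c21, c23, c30, c31, c32⟩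
    simp only [List.mem_range] at hi hj hk hl
    have hcmp : ∀ p ∈ List.range 4, ∀ q ∈ List.range 4,
        (w.getD ([i, j, k, l].getD p 0) 0 < w.getD ([i, j, k, l].getD q 0) 0 ↔
          σ.getD p 0 < σ.getD q 0) := by
      intro p hp q hq
      simp only [List.mem_range] at hp hq
      interval_cases p <;> interval_cases q <;>
        simp only [List.getD_cons_zero, List.getD_cons_succ] <;>
        first
          | exact c01 | exact c02 | exact c03 | exact c10 | exact c12 | exact c13
          | exact c20 | exact c21 | exact c23 | exact c30 | exact c31 | exact c32
          | simp
    have hw : ∀ p : Fin σ.length, [i, j, k, l].getD p.val 0 < w.length := by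
      rintro ⟨p, hp⟩
      have hp4 : p < 4 := by omega
      interval_cases p <;> simpa
    refine ⟨fun p => ⟨[i, j, k, l].getD p.val 0, hw p⟩, ?_, ?_⟩
    · rintro ⟨a, ha⟩ ⟨b, hb⟩ hab
      simp only [Fin.lt_def] at hab ⊢
      have ha4 : a < 4 := by omega
      have hb4 : b < 4 := by omega
      interval_cases a <;> interval_cases b <;> simp_all <;> omega
    · rintro ⟨p, hp⟩ ⟨q, hq⟩
      have hp4 : p < 4 := by omega
      have hq4 : q < 4 := by omega
      have h := hcmp p (List.mem_range.mpr hp4) q (List.mem_range.mpr hq4)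
      rw [getD_of_lt _ _ (hw ⟨p, hp⟩), getD_of_lt _ _ (hw ⟨q, hq⟩),
        getD_of_lt _ _ hp, getD_of_lt _ _ hq] at h
      simpa [List.get_eq_getElem] using h

/-- Decidable version of being a circular 4-superpattern. -/
def circProp (w : List ℕ) : Prop :=
  ∀ σ ∈ [1, 2, 3, 4].permutations', ∃ r ∈ [0, 1, 2, 3], Q w (σ.rotate r)

instance circDec (w : List ℕ) : Decidable (circProp w) := List.decidableBAll _ _

lemma circ_iff (w : List ℕ) : IsCircSuperpattern 4 w ↔ circProp w := by
  constructor
  · intro h σ hσ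
    have hperm : IsPermList 4 σ := List.mem_permutations'.mp hσ
    obtain ⟨r, hr, hoic⟩ := h σ hperm
    have hlen : (σ.rotate r).length = 4 := by
      rw [List.length_rotate]; simpa using hperm.length_eq
    refine ⟨r, ?_, (oic_iff_Q w _ hlen).mp hoic⟩
    interval_cases r <;> simp
  · intro h σ hσ
    obtain ⟨r, hr, hq⟩ := h σ (List.mem_permutations'.mpr hσ)
    have hlen : (σ.rotate r).length = 4 := by
      rw [List.length_rotate]; simpa using hσ.length_eq
    refine ⟨r, ?_, (oic_iff_Q w _ hlen).mpr hq⟩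
    simp at hr; omega

set_option maxHeartbeats 4000000 in
lemma pos6 : circProp [2, 4, 3, 1, 5, 6] := by decide

set_option maxHeartbeats 4000000 in
lemma neg4 : ∀ w ∈ [1, 2, 3, 4].permutations', ¬ circProp w := by decide

set_option maxHeartbeats 16000000 in
set_option maxRecDepth 10000 in
lemma neg5 : ∀ w ∈ [1, 2, 3, 4, 5].permutations', ¬ circProp w := by decide

/-- The minimal length of a circular 4-superpattern is 6: there is a circular
4-superpattern of length 6, and none of length at most 5. -/
theorem min_circ_four_superpattern_length :
    (∃ w : List ℕ, IsPermList 6 w ∧ IsCircSuperpattern 4 w) ∧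
    (∀ n ≤ 5, ∀ w : List ℕ, IsPermList n w → ¬ IsCircSuperpattern 4 w) := by
  constructor
  · exact ⟨[2, 4, 3, 1, 5, 6], by decide, (circ_iff _).mpr pos6⟩
  · intro n hn w hw hc
    have hlen : w.length = n := by simpa using hw.length_eq
    have h4 : 4 ≤ n := by
      obtain ⟨r, hr, f, hf, -⟩ := hc ([1, 2, 3, 4]) (by decide)
      have := Fintype.card_le_of_injective f hf.injective
      simpa [hlen] using this
    interval_cases n
    · exact neg4 w (List.mem_permutations'.mpr hw) ((circ_iff w).mp hc)
    · exact neg5 w (List.mem_permutations'.mpr hw) ((circ_iff w).mp hc)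
end
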